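/- Let V be a finite-dimensional real vector space. A symmetric bilinear form Q on V is a limit of symmetric bilinear forms on V having the Hodge-Riemann property if and only if Q has the weak Hodge-Riemann property, i.e., there exists v ≠ 0 with Q(v,v) ≥ 0 and a linear subspace of V of codimension at most one on which Q is negative semidefinite. -/

import Mathlib

/-!
Diagonalize `Q` in an orthogonal basis, with diagonal entries `dᵢ`. A subspace on which a form
is positive definite meets a subspace of codimension at most one on which it is negative
semidefinite only in `0`, so it has dimension at most one. Hence the weak Hodge-Riemann property
says exactly that some `dᵢ ≥ 0` and at most one `dᵢ > 0`, and moving the entries by `±ε` in the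
right directions gives Hodge-Riemann forms converging to `Q`. Conversely, being negative definite
and being positive definite on a fixed subspace are open conditions (the unit sphere of a
finite-dimensional space is compact), so a limit of Hodge-Riemann forms is not negative definite
and is positive definite on no plane, which is the weak Hodge-Riemann property.
-/

open Filter Topology

/-- A symmetric bilinear form `Q` on a finite-dimensional real vector space has the
*Hodge-Riemann property* if it is nondegenerate and has exactly one positive
eigenvalue, i.e. there is a vector `v` with `Q v v > 0` and a codimension-one
subspace on which `Q` is negative definite (signature `(+,−,…,−)`). -/
def HodgeRiemann {V : Type*} [AddCommGroup V] [Module ℝ V]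
    (Q : V →ₗ[ℝ] V →ₗ[ℝ] ℝ) : Prop :=
  (∀ v : V, (∀ w : V, Q v w = 0) → v = 0) ∧
    (∃ v : V, 0 < Q v v) ∧
    ∃ W : Submodule ℝ V, Module.finrank ℝ W + 1 = Module.finrank ℝ V ∧
      ∀ w ∈ W, w ≠ 0 → Q w w < 0

open Module Submodule Matrix

theorem Module.Basis.finrank_span_image_finset {K V ι : Type*} [DivisionRing K] [AddCommGroup V]
    [Module K V] (b : Basis ι K V) (s : Finset ι) :
    finrank K (span K (b '' s)) = s.card := by
  rw [Set.image_eq_range]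
  exact (finrank_span_eq_card (b.linearIndependent.comp _ Subtype.val_injective)).trans (by simp)

theorem Matrix.eventually_forall_dotProduct_mulVec_pos {ι : Type*} [Fintype ι]
    {M : Matrix ι ι ℝ} (hM : ∀ c ≠ 0, 0 < c ⬝ᵥ M *ᵥ c) :
    ∀ᶠ N in 𝓝 M, ∀ c ≠ 0, 0 < c ⬝ᵥ N *ᵥ c := by
  have hcont : Continuous fun p : Matrix ι ι ℝ × (ι → ℝ) => p.2 ⬝ᵥ p.1 *ᵥ p.2 := by fun_prop
  have hsphere : ∀ᶠ N in 𝓝 M, ∀ c ∈ Metric.sphere (0 : ι → ℝ) 1, 0 < c ⬝ᵥ N *ᵥ c :=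
    (isCompact_sphere 0 1).eventually_forall_of_forall_eventually fun c hc =>
      (hcont.tendsto (M, c)).eventually_const_lt
        (hM c (ne_zero_of_mem_sphere one_ne_zero ⟨c, hc⟩))
  filter_upwards [hsphere] with N hN c hc
  have hc' : 0 < ‖c‖ := norm_pos_iff.2 hc
  have := hN (‖c‖⁻¹ • c) (by simp [norm_smul, hc'.ne'])
  rw [Matrix.mulVec_smul, dotProduct_smul, smul_dotProduct, smul_eq_mul, smul_eq_mul] at this
  exact pos_of_mul_pos_right (pos_of_mul_pos_right this (by positivity)) (by positivity)

namespace LinearMap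

section CommRing

variable {R M ι : Type*} [CommRing R] [AddCommGroup M] [Module R M] [Fintype ι]
  {B : M →ₗ[R] M →ₗ[R] R} {b : Basis ι R M}

theorem IsOrthoᵢ.apply_eq_sum (hb : B.IsOrthoᵢ b) (x y : M) :
    B x y = ∑ i, b.repr x i * b.repr y i * B (b i) (b i) := by
  conv_lhs => rw [← b.sum_repr x, ← b.sum_repr y]
  simp only [map_sum, map_smul, sum_apply, smul_apply, smul_eq_mul]
  refine Finset.sum_congr rfl fun i _ => ?_
  rw [Finset.sum_eq_single i (fun j _ hji => by rw [isOrthoᵢ_def.1 hb _ _ hji, mul_zero])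
    (by simp)]
  ring

theorem IsOrthoᵢ.apply_comm (hb : B.IsOrthoᵢ b) (x y : M) : B x y = B y x := by
  simp only [hb.apply_eq_sum x, hb.apply_eq_sum y, mul_comm (b.repr x _)]

variable [LinearOrder R] [IsStrictOrderedRing R]

theorem IsOrthoᵢ.apply_self_pos (hb : B.IsOrthoᵢ b) {x : M} (hx : x ≠ 0)
    (h : ∀ i, b.repr x i ≠ 0 → 0 < B (b i) (b i)) : 0 < B x x := by
  obtain ⟨j, hj⟩ : ∃ j, b.repr x j ≠ 0 := by
    by_contra! h
    exact hx (b.repr.map_eq_zero_iff.1 (Finsupp.ext h))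
  rw [hb.apply_eq_sum]
  refine Finset.sum_pos' (fun i _ => ?_)
    ⟨j, Finset.mem_univ j, mul_pos (mul_self_pos.2 hj) (h j hj)⟩
  by_cases hi : b.repr x i = 0
  · simp [hi]
  · exact (mul_pos (mul_self_pos.2 hi) (h i hi)).le

theorem IsOrthoᵢ.apply_self_neg (hb : B.IsOrthoᵢ b) {x : M} (hx : x ≠ 0)
    (h : ∀ i, b.repr x i ≠ 0 → B (b i) (b i) < 0) : B x x < 0 := by
  have hb' : (-B).IsOrthoᵢ b := isOrthoᵢ_def.2 fun i j hij => by
    simp [isOrthoᵢ_def.1 hb i j hij]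
  simpa using hb'.apply_self_pos hx (by simpa using h)

theorem IsOrthoᵢ.apply_self_nonpos (hb : B.IsOrthoᵢ b) {x : M}
    (h : ∀ i, b.repr x i ≠ 0 → B (b i) (b i) ≤ 0) : B x x ≤ 0 := by
  rw [hb.apply_eq_sum]
  refine Finset.sum_nonpos fun i _ => ?_
  by_cases hi : b.repr x i = 0
  · simp [hi]
  · exact mul_nonpos_of_nonneg_of_nonpos (mul_self_nonneg _) (h i hi)

end CommRing

section OrderedField

variable {K V ι : Type*} [Field K] [LinearOrder K] [AddCommGroup V] [Module K V]
  {B : V →ₗ[K] V →ₗ[K] K}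

def PosDefOn (B : V →ₗ[K] V →ₗ[K] K) (P : Submodule K V) : Prop :=
  ∀ x ∈ P, x ≠ 0 → 0 < B x x

theorem PosDefOn.finrank_le_one_of_nonpos [FiniteDimensional K V] {P W : Submodule K V}
    (hP : B.PosDefOn P) (hW : finrank K V ≤ finrank K W + 1) (hBW : ∀ w ∈ W, B w w ≤ 0) :
    finrank K P ≤ 1 := by
  have hPW : P ⊓ W = ⊥ := (Submodule.eq_bot_iff _).2 fun x hx =>
    by_contra fun hx0 => (hBW x hx.2).not_gt (hP x hx.1 hx0)
  have := Submodule.finrank_sup_add_finrank_inf_eq P W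
  have := Submodule.finrank_le (P ⊔ W)
  rw [hPW, finrank_bot] at *
  omega

variable [IsStrictOrderedRing K]

theorem IsOrthoᵢ.posDefOn_span_image [Fintype ι] {b : Basis ι K V}
    (hb : B.IsOrthoᵢ b) {s : Set ι} (hs : ∀ i ∈ s, 0 < B (b i) (b i)) :
    B.PosDefOn (span K (b '' s)) := fun _ hx hx0 =>
  hb.apply_self_pos hx0 fun i hi => hs i (b.mem_span_image.1 hx (Finsupp.mem_support_iff.2 hi))

theorem exists_codim_le_one_nonpos_of_posDefOn_finrank_le_one [FiniteDimensional K V]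
    (hB : ∀ x y, B x y = B y x) (h : ∀ P, B.PosDefOn P → finrank K P ≤ 1) :
    ∃ W : Submodule K V, finrank K V ≤ finrank K W + 1 ∧ ∀ w ∈ W, B w w ≤ 0 := by
  classical
  have : Invertible (2 : K) := invertibleOfNonzero two_ne_zero
  obtain ⟨b, hb⟩ := BilinForm.exists_orthogonal_basis ⟨hB⟩
  set s := Finset.univ.filter fun i => 0 < B (b i) (b i)
  have hs : s.card ≤ 1 := by
    simpa [b.finrank_span_image_finset] using h _ (hb.posDefOn_span_image (s := s) (by simp [s]))
  refine ⟨span K (b '' ↑sᶜ), ?_, fun w hw => hb.apply_self_nonpos fun i hi => ?_⟩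
  · rw [b.finrank_span_image_finset, Finset.card_compl, Fintype.card_fin]
    omega
  · simpa [s] using b.mem_span_image.1 hw (Finsupp.mem_support_iff.2 hi)

end OrderedField

section Real

variable {V : Type*} [AddCommGroup V] [Module ℝ V]

theorem eventually_forall_apply_self_pos_of_tendsto [FiniteDimensional ℝ V] {α : Type*}
    {l : Filter α} {B : α → V →ₗ[ℝ] V →ₗ[ℝ] ℝ} {B₀ : V →ₗ[ℝ] V →ₗ[ℝ] ℝ}
    (hB : ∀ x y, Tendsto (fun a => B a x y) l (𝓝 (B₀ x y))) (h : ∀ x ≠ 0, 0 < B₀ x x) :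
    ∀ᶠ a in l, ∀ x ≠ 0, 0 < B a x x := by
  let b := Module.finBasis ℝ V
  have hrepr (B' : V →ₗ[ℝ] V →ₗ[ℝ] ℝ) (c : Fin (finrank ℝ V) → ℝ) :
      c ⬝ᵥ toMatrix₂ b b B' *ᵥ c = B' (b.equivFun.symm c) (b.equivFun.symm c) := by
    simpa using dotProduct_toMatrix₂_mulVec b b B' c c
  have hlim : Tendsto (fun a => toMatrix₂ b b (B a)) l (𝓝 (toMatrix₂ b b B₀)) :=
    tendsto_pi_nhds.2 fun i => tendsto_pi_nhds.2 fun j => by simpa using hB (b i) (b j)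
  have hpos : ∀ c ≠ 0, 0 < c ⬝ᵥ toMatrix₂ b b B₀ *ᵥ c := fun c hc => by
    simpa [hrepr] using h _ (b.equivFun.symm.map_ne_zero_iff.2 hc)
  filter_upwards [hlim.eventually (Matrix.eventually_forall_dotProduct_mulVec_pos hpos)]
    with a ha x hx
  simpa [hrepr] using ha _ (b.equivFun.map_ne_zero_iff.2 hx)

theorem PosDefOn.eventually_of_tendsto [FiniteDimensional ℝ V] {α : Type*} {l : Filter α}
    {B : α → V →ₗ[ℝ] V →ₗ[ℝ] ℝ} {B₀ : V →ₗ[ℝ] V →ₗ[ℝ] ℝ} {P : Submodule ℝ V}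
    (hB : ∀ x y, Tendsto (fun a => B a x y) l (𝓝 (B₀ x y))) (h : B₀.PosDefOn P) :
    ∀ᶠ a in l, (B a).PosDefOn P := by
  have := eventually_forall_apply_self_pos_of_tendsto
    (B := fun a => (B a).compl₁₂ P.subtype P.subtype) (B₀ := B₀.compl₁₂ P.subtype P.subtype)
    (fun x y => hB x y) fun x hx => h x x.2 (by simpa using hx)
  filter_upwards [this] with a ha x hx hx0 using ha ⟨x, hx⟩ (by simpa using hx0)

theorem IsOrthoᵢ.hodgeRiemann {ι : Type*} [Fintype ι] [DecidableEq ι]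
    {B : V →ₗ[ℝ] V →ₗ[ℝ] ℝ} {b : Basis ι ℝ V} (hb : B.IsOrthoᵢ b) (i₀ : ι)
    (hpos : 0 < B (b i₀) (b i₀)) (hneg : ∀ i ≠ i₀, B (b i) (b i) < 0) : HodgeRiemann B := by
  have hne (i : ι) : B (b i) (b i) ≠ 0 := by
    rcases eq_or_ne i i₀ with rfl | hi
    exacts [hpos.ne', (hneg i hi).ne]
  refine ⟨IsOrthoᵢ.separatingLeft_of_not_isOrtho_basis_self b hb hne, ⟨b i₀, hpos⟩,
    span ℝ (b '' ↑({i₀}ᶜ : Finset ι)), ?_,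
    fun w hw hw0 => hb.apply_self_neg hw0 fun i hi => hneg i ?_⟩
  · have : 0 < Fintype.card ι := Fintype.card_pos_iff.2 ⟨i₀⟩
    rw [b.finrank_span_image_finset, finrank_eq_card_basis b, Finset.card_compl,
      Finset.card_singleton]
    omega
  · simpa using b.mem_span_image.1 hw (Finsupp.mem_support_iff.2 hi)

end Real

end LinearMap

open LinearMap

def WeakHodgeRiemann {V : Type*} [AddCommGroup V] [Module ℝ V]
    (Q : V →ₗ[ℝ] V →ₗ[ℝ] ℝ) : Prop :=
  (∃ v : V, v ≠ 0 ∧ 0 ≤ Q v v) ∧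
    ∃ W : Submodule ℝ V, Module.finrank ℝ V ≤ Module.finrank ℝ W + 1 ∧ ∀ w ∈ W, Q w w ≤ 0

section

variable {V : Type*} [AddCommGroup V] [Module ℝ V]

theorem HodgeRiemann.weakHodgeRiemann {Q : V →ₗ[ℝ] V →ₗ[ℝ] ℝ} (h : HodgeRiemann Q) :
    WeakHodgeRiemann Q := by
  obtain ⟨-, ⟨v, hv⟩, W, hW, hQW⟩ := h
  refine ⟨⟨v, fun hv0 => by simp [hv0] at hv, hv.le⟩, W, hW.ge, fun w hw => ?_⟩
  rcases eq_or_ne w 0 with rfl | hw0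
  · simp
  · exact (hQW w hw hw0).le

theorem WeakHodgeRiemann.of_tendsto [FiniteDimensional ℝ V] {α : Type*} {l : Filter α}
    [l.NeBot] {Q : α → V →ₗ[ℝ] V →ₗ[ℝ] ℝ} {Q₀ : V →ₗ[ℝ] V →ₗ[ℝ] ℝ}
    (hQ₀ : ∀ x y, Q₀ x y = Q₀ y x) (hQ : ∀ x y, Tendsto (fun a => Q a x y) l (𝓝 (Q₀ x y)))
    (h : ∀ᶠ a in l, WeakHodgeRiemann (Q a)) : WeakHodgeRiemann Q₀ := by
  refine ⟨?_, exists_codim_le_one_nonpos_of_posDefOn_finrank_le_one hQ₀ fun P hP => ?_⟩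
  · by_contra! hneg
    have hnegdef := eventually_forall_apply_self_pos_of_tendsto (B := fun a => -Q a) (B₀ := -Q₀)
      (fun x y => (hQ x y).neg) fun x hx => by simpa using hneg x hx
    obtain ⟨a, ha, ⟨v, hv0, hv⟩, -⟩ := (hnegdef.and h).exists
    exact (ha v hv0).not_ge (by simpa using hv)
  · obtain ⟨a, haP, -, W, hW, hQW⟩ := ((hP.eventually_of_tendsto hQ).and h).exists
    exact haP.finrank_le_one_of_nonpos hW hQW

theorem WeakHodgeRiemann.exists_nonneg_forall_ne_nonpos {ι : Type*} [Fintype ι]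
    {Q : V →ₗ[ℝ] V →ₗ[ℝ] ℝ} {b : Basis ι ℝ V} (hb : Q.IsOrthoᵢ b) (h : WeakHodgeRiemann Q) :
    ∃ i₀, 0 ≤ Q (b i₀) (b i₀) ∧ ∀ i ≠ i₀, Q (b i) (b i) ≤ 0 := by
  classical
  have := Module.Finite.of_basis b
  obtain ⟨⟨v, hv0, hv⟩, W, hW, hQW⟩ := h
  have huniq (i j : ι) (hi : 0 < Q (b i) (b i)) (hj : 0 < Q (b j) (b j)) : i = j := by
    by_contra hij
    have := (hb.posDefOn_span_image (s := ↑({i, j} : Finset ι)) (by simp [hi, hj]))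
      |>.finrank_le_one_of_nonpos hW hQW
    rw [b.finrank_span_image_finset, Finset.card_pair hij] at this
    omega
  by_cases hpos : ∃ i₀, 0 < Q (b i₀) (b i₀)
  · obtain ⟨i₀, hi₀⟩ := hpos
    exact ⟨i₀, hi₀.le, fun i hi => not_lt.1 fun h => hi (huniq i i₀ h hi₀)⟩
  · push Not at hpos
    obtain ⟨i₀, hi₀⟩ : ∃ i₀, 0 ≤ Q (b i₀) (b i₀) := by
      by_contra! hneg
      exact (hb.apply_self_neg hv0 fun i _ => hneg i).not_ge hv
    exact ⟨i₀, hi₀, fun i _ => hpos i⟩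

theorem WeakHodgeRiemann.exists_tendsto_hodgeRiemann [FiniteDimensional ℝ V]
    {Q : V →ₗ[ℝ] V →ₗ[ℝ] ℝ} (hQ : ∀ x y, Q x y = Q y x) (h : WeakHodgeRiemann Q) :
    ∃ Qs : ℕ → (V →ₗ[ℝ] V →ₗ[ℝ] ℝ),
      (∀ n, (∀ v v' : V, Qs n v v' = Qs n v' v) ∧ HodgeRiemann (Qs n)) ∧
        ∀ v v' : V, Tendsto (fun n => Qs n v v') atTop (𝓝 (Q v v')) := by
  classical
  obtain ⟨b, hb⟩ := BilinForm.exists_orthogonal_basis ⟨hQ⟩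
  obtain ⟨i₀, hi₀, hneg⟩ := h.exists_nonneg_forall_ne_nonpos hb
  -- `R` has signature `(+, -, …, -)` in the basis `b`, with its positive entry where `Q` may
  -- have one, so `Q + ε R` is Hodge-Riemann for `ε > 0`.
  let R := Matrix.toLinearMap₂ b b (Matrix.diagonal fun i => if i = i₀ then (1 : ℝ) else -1)
  have hR (i j) : R (b i) (b j) = if i = j then (if i = i₀ then 1 else -1) else 0 :=
    (Matrix.toLinearMap₂_apply_basis ..).trans (Matrix.diagonal_apply ..)
  let ε : ℕ → ℝ := fun n => 1 / (n + 1)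
  have hε (n) : 0 < ε n := by positivity
  have horth (n) : (Q + ε n • R).IsOrthoᵢ b :=
    isOrthoᵢ_def.2 fun i j hij => by simp [isOrthoᵢ_def.1 hb i j hij, hR, hij]
  refine ⟨fun n => Q + ε n • R, fun n => ⟨(horth n).apply_comm,
    (horth n).hodgeRiemann i₀ ?_ fun i hi => ?_⟩, fun v v' => ?_⟩
  · simp only [LinearMap.add_apply, LinearMap.smul_apply, hR, if_true, smul_eq_mul]
    linarith [hε n]
  · simp only [LinearMap.add_apply, LinearMap.smul_apply, hR, if_true, if_neg hi, smul_eq_mul]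
    linarith [hneg i hi, hε n]
  · simpa [ε] using
      tendsto_const_nhds.add (tendsto_one_div_add_atTop_nhds_zero_nat.mul_const (R v v'))

end

-- Pointwise convergence of bilinear forms on a finite-dimensional space is convergence in the
-- standard topology on the space of bilinear forms.
/-- a symmetric bilinear form `Q` on a finite-dimensional real vector
space is a limit of symmetric bilinear forms having the Hodge-Riemann property if and
only if it has the weak Hodge-Riemann property: there exists `v ≠ 0` with `Q v v ≥ 0`
and a subspace of codimension at most one on which `Q` is negative semidefinite.
(Convergence of bilinear forms on a finite-dimensional space is pointwise
convergence, which agrees with convergence in the standard topology on the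
finite-dimensional space of bilinear forms.) -/
theorem limit_hodgeRiemann_iff_weak
    {V : Type*} [AddCommGroup V] [Module ℝ V] [FiniteDimensional ℝ V]
    (Q : V →ₗ[ℝ] V →ₗ[ℝ] ℝ) (hsymm : ∀ v v' : V, Q v v' = Q v' v) :
    (∃ Qs : ℕ → (V →ₗ[ℝ] V →ₗ[ℝ] ℝ),
        (∀ n, (∀ v v' : V, Qs n v v' = Qs n v' v) ∧ HodgeRiemann (Qs n)) ∧
        ∀ v v' : V, Tendsto (fun n => Qs n v v') atTop (𝓝 (Q v v'))) ↔
      ((∃ v : V, v ≠ 0 ∧ 0 ≤ Q v v) ∧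
        ∃ W : Submodule ℝ V, Module.finrank ℝ V ≤ Module.finrank ℝ W + 1 ∧
          ∀ w ∈ W, Q w w ≤ 0) := by
  refine ⟨fun ⟨Qs, hQs, hlim⟩ => ?_, WeakHodgeRiemann.exists_tendsto_hodgeRiemann hsymm⟩
  exact WeakHodgeRiemann.of_tendsto hsymm hlim
    (Eventually.of_forall fun n => (hQs n).2.weakHodgeRiemann)
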